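/- arXiv:math/0006133 — 4 statements merged into one kernel-verified Lean document; each statement's English description precedes it below -/
import Mathlib

section
/- If γ : [0,∞) → [0,∞) is continuous, nondecreasing, unbounded, positive on (0,∞), and γ(0) = 0, then there exists a class K∞ function α with α(s) ≤ γ(s) for all s ≥ 0. -/
/-- A class `K∞` function: continuous, strictly increasing on `[0,∞)`,
vanishing at `0`, and unbounded. -/
def ClassKInf (ρ : ℝ → ℝ) : Prop :=
  ContinuousOn ρ (Set.Ici 0) ∧ StrictMonoOn ρ (Set.Ici 0) ∧ ρ 0 = 0 ∧
    ∀ M : ℝ, ∃ s : ℝ, 0 ≤ s ∧ M < ρ s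

theorem exists_classKInf_below (γ : ℝ → ℝ)
    (hcont : ContinuousOn γ (Set.Ici 0))
    (hmono : MonotoneOn γ (Set.Ici 0))
    (hunb : ∀ M : ℝ, ∃ s : ℝ, 0 ≤ s ∧ M < γ s)
    (hpos : ∀ s : ℝ, 0 < s → 0 < γ s)
    (h0 : γ 0 = 0) :
    ∃ α : ℝ → ℝ, ClassKInf α ∧ ∀ s : ℝ, 0 ≤ s → α s ≤ γ s := by
  have hγ0 : ∀ s : ℝ, 0 ≤ s → 0 ≤ γ s := by
    intro s hs
    rcases eq_or_lt_of_le hs with h | h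
    · simp [← h, h0]
    · exact (hpos s h).le
  refine ⟨fun s => s / (1 + s) * γ s, ⟨?_, ?_, by simp, ?_⟩, ?_⟩
  · -- continuity
    apply ContinuousOn.mul _ hcont
    apply ContinuousOn.div continuousOn_id (by fun_prop)
    intro x hx
    have : (0:ℝ) ≤ x := hx
    positivity
  · -- strict mono
    intro a ha b hb hab
    have ha' : (0:ℝ) ≤ a := ha
    have hb' : (0:ℝ) < b := lt_of_le_of_lt ha' hab
    have hf : a / (1 + a) < b / (1 + b) := by
      rw [div_lt_div_iff₀ (by linarith) (by linarith)]
      nlinarith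
    have hfa : 0 ≤ a / (1 + a) := by positivity
    calc a / (1 + a) * γ a ≤ a / (1 + a) * γ b :=
          mul_le_mul_of_nonneg_left (hmono ha hb hab.le) hfa
      _ < b / (1 + b) * γ b := mul_lt_mul_of_pos_right hf (hpos b hb')
  · -- unbounded
    intro M
    obtain ⟨s, hs, hMs⟩ := hunb (2 * M)
    refine ⟨max s 1, le_trans zero_le_one (le_max_right _ _), ?_⟩
    set t := max s 1 with ht
    have ht1 : (1:ℝ) ≤ t := le_max_right _ _
    have hγt : 2 * M < γ t :=
      lt_of_lt_of_le hMs (hmono hs (by positivity : (0:ℝ) ≤ t) (le_max_left _ _))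
    have hft : (1:ℝ)/2 ≤ t / (1 + t) := by
      rw [div_le_div_iff₀ (by norm_num) (by linarith)]
      linarith
    have hγtpos : 0 ≤ γ t := hγ0 t (by positivity)
    calc M = 1/2 * (2 * M) := by ring
      _ < 1/2 * γ t := by linarith
      _ ≤ t / (1 + t) * γ t := mul_le_mul_of_nonneg_right hft hγtpos
  · -- below γ
    intro s hs
    have h1 : s / (1 + s) ≤ 1 := by
      rw [div_le_one (by linarith)]; linarith
    calc s / (1 + s) * γ s ≤ 1 * γ s := mul_le_mul_of_nonneg_right h1 (hγ0 s hs)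
      _ = γ s := one_mul _
end

section
/- Let H_r : ℝ^n × ℝ → ℝ be continuous. The following are equivalent: (a) there exist class K∞ functions ρ1, ρ2 such that |u0| ≤ ρ1(|x|) + ρ2(|H_r(x,u0)|) for all x ∈ ℝ^n and u0 ∈ ℝ; (b) (i) for each compact set X ⊂ ℝ^n and each K > 0 there exists M such that |H_r(x,u0)| ≥ K whenever x ∈ X and |u0| ≥ M, and (ii) H_r(0,u0) ≠ 0 for all u0 ≠ 0. -/
open Set Filter Topology MeasureTheory intervalIntegral

namespace ClassKInf

variable {ρ : ℝ → ℝ}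

lemma monotoneOn (hρ : ClassKInf ρ) : MonotoneOn ρ (Ici 0) :=
  hρ.2.1.monotoneOn

lemma nonneg (hρ : ClassKInf ρ) {s : ℝ} (hs : 0 ≤ s) : 0 ≤ ρ s :=
  hρ.2.2.1 ▸ hρ.monotoneOn self_mem_Ici hs hs

lemma apply_max_le_add (hρ : ClassKInf ρ) {a b : ℝ} (ha : 0 ≤ a) (hb : 0 ≤ b) :
    ρ (max a b) ≤ ρ a + ρ b := by
  rcases le_total a b with h | h
  · rw [max_eq_right h]; linarith [hρ.nonneg ha]
  · rw [max_eq_left h]; linarith [hρ.nonneg hb]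

end ClassKInf

section Majorant

variable {φ : ℝ → ℝ}

noncomputable def dilationAverage (φ : ℝ → ℝ) (s : ℝ) : ℝ :=
  ∫ u in (1 : ℝ)..2, φ (s * u)

lemma Monotone.intervalIntegrable_comp_mul_left (hφ : Monotone φ) {s : ℝ} (hs : 0 ≤ s) :
    IntervalIntegrable (fun u => φ (s * u)) volume 1 2 :=
  (hφ.comp (monotone_mul_left_of_nonneg hs)).intervalIntegrable

lemma le_dilationAverage (hφ : Monotone φ) {s : ℝ} (hs : 0 ≤ s) : φ s ≤ dilationAverage φ s :=
  calc φ s = ∫ _ in (1 : ℝ)..2, φ s := by norm_num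
    _ ≤ dilationAverage φ s :=
      integral_mono_on one_le_two intervalIntegrable_const
        (hφ.intervalIntegrable_comp_mul_left hs) fun _ hu => hφ (le_mul_of_one_le_right hs hu.1)

lemma dilationAverage_le (hφ : Monotone φ) {s : ℝ} (hs : 0 ≤ s) :
    dilationAverage φ s ≤ φ (2 * s) :=
  calc dilationAverage φ s ≤ ∫ _ in (1 : ℝ)..2, φ (2 * s) :=
      integral_mono_on one_le_two (hφ.intervalIntegrable_comp_mul_left hs)
        intervalIntegrable_const fun _ hu => hφ (by nlinarith [hu.2])
    _ = φ (2 * s) := by norm_num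

lemma monotoneOn_dilationAverage (hφ : Monotone φ) : MonotoneOn (dilationAverage φ) (Ici 0) :=
  fun _ hs _ ht hst => integral_mono_on one_le_two (hφ.intervalIntegrable_comp_mul_left hs)
    (hφ.intervalIntegrable_comp_mul_left ht)
    fun _ hu => hφ (mul_le_mul_of_nonneg_right hst (zero_le_one.trans hu.1))

lemma mul_dilationAverage (φ : ℝ → ℝ) (s : ℝ) :
    s * dilationAverage φ s = ∫ x in s..2 * s, φ x := by
  rw [dilationAverage, ← smul_eq_mul, smul_integral_comp_mul_left, mul_one, mul_comm]

lemma continuousOn_dilationAverage (hφ : Monotone φ) (hφ0 : ContinuousWithinAt φ (Ici 0) 0) :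
    ContinuousOn (dilationAverage φ) (Ici 0) := by
  intro s hs
  rcases (mem_Ici.1 hs).eq_or_lt with rfl | hs
  · have hdouble : Tendsto (fun t : ℝ => 2 * t) (𝓝[≥] 0) (𝓝[≥] 0) := by
      simpa using (continuousWithinAt_id.const_mul (2 : ℝ)).tendsto_nhdsWithin (x := 0)
        (s := Ici 0) (t := Ici 0) fun t (ht : 0 ≤ t) => mul_nonneg zero_le_two ht
    have hφ2 : Tendsto (fun t => φ (2 * t)) (𝓝[≥] 0) (𝓝 (φ 0)) := hφ0.tendsto.comp hdouble
    rw [ContinuousWithinAt, show dilationAverage φ 0 = φ 0 by norm_num [dilationAverage]]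
    refine tendsto_of_tendsto_of_tendsto_of_le_of_le' tendsto_const_nhds hφ2 ?_ ?_
    · filter_upwards [self_mem_nhdsWithin] with t ht using (hφ ht).trans (le_dilationAverage hφ ht)
    · filter_upwards [self_mem_nhdsWithin] with t ht using dilationAverage_le hφ ht
  · have hint : ∀ a b : ℝ, IntervalIntegrable φ volume a b := fun _ _ => hφ.intervalIntegrable
    have hprim := continuous_primitive hint 0
    have hquot : ContinuousAt
        (fun t => t⁻¹ * ((∫ x in (0 : ℝ)..2 * t, φ x) - ∫ x in (0 : ℝ)..t, φ x)) s :=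
      (continuousAt_inv₀ hs.ne').mul
        ((hprim.comp (continuous_const_mul 2)).continuousAt.sub hprim.continuousAt)
    refine (hquot.congr ?_).continuousWithinAt
    filter_upwards [eventually_ne_nhds hs.ne'] with t ht
    rw [integral_interval_sub_left (hint _ _) (hint _ _), ← mul_dilationAverage,
      inv_mul_cancel_left₀ ht]

theorem exists_classKInf_ge (hφ : Monotone φ) (hφ0 : φ 0 = 0)
    (hφc : ContinuousWithinAt φ (Ici 0) 0) : ∃ ρ, ClassKInf ρ ∧ ∀ s, 0 ≤ s → φ s ≤ ρ s := by
  have hG0 : dilationAverage φ 0 = 0 := by simp [dilationAverage, hφ0]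
  have hG : ∀ s, 0 ≤ s → 0 ≤ dilationAverage φ s := fun s hs =>
    hφ0 ▸ (hφ hs).trans (le_dilationAverage hφ hs)
  refine ⟨fun s => s + dilationAverage φ s,
    ⟨continuousOn_id.add (continuousOn_dilationAverage hφ hφc),
      fun s hs t ht hst => add_lt_add_of_lt_of_le hst (monotoneOn_dilationAverage hφ hs ht hst.le),
      by simp [hG0], fun M => ⟨max (M + 1) 0, le_max_right _ _, ?_⟩⟩,
    fun s hs => by linarith [le_dilationAverage hφ hs]⟩
  linarith [le_max_left (M + 1) 0, hG _ (le_max_right (M + 1) 0)]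

end Majorant

section Gain

variable {E : Type*} [NormedAddCommGroup E] {H : E → ℝ → ℝ}

def UniformlyCoercive (H : E → ℝ → ℝ) : Prop :=
  ∀ X : Set E, IsCompact X → ∀ K : ℝ, 0 < K → ∃ M : ℝ, ∀ x ∈ X, ∀ u : ℝ, M ≤ |u| → K ≤ |H x u|

noncomputable def gain (H : E → ℝ → ℝ) (r : ℝ) : ℝ :=
  sSup (insert 0 ((fun p : E × ℝ => |p.2|) '' {p | ‖p.1‖ ≤ r ∧ |H p.1 p.2| ≤ r}))

lemma UniformlyCoercive.of_abs_le_add {ρ₁ ρ₂ : ℝ → ℝ} (hρ₁ : MonotoneOn ρ₁ (Ici 0))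
    (hρ₂ : MonotoneOn ρ₂ (Ici 0)) (hb : ∀ x u, |u| ≤ ρ₁ ‖x‖ + ρ₂ |H x u|) :
    UniformlyCoercive H := by
  intro X hX K hK
  obtain ⟨C, hC⟩ := hX.isBounded.exists_norm_le
  refine ⟨ρ₁ (max C 0) + ρ₂ K + 1, fun x hx u hu => ?_⟩
  by_contra! hlt
  have h₁ : ρ₁ ‖x‖ ≤ ρ₁ (max C 0) :=
    hρ₁ (norm_nonneg x) (le_max_right C 0) ((hC x hx).trans (le_max_left C 0))
  have h₂ : ρ₂ |H x u| ≤ ρ₂ K := hρ₂ (abs_nonneg (H x u)) hK.le hlt.le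
  linarith [hb x u]

lemma apply_zero_ne_zero_of_abs_le_add {ρ₁ ρ₂ : ℝ → ℝ} (hρ₁ : ρ₁ 0 = 0) (hρ₂ : ρ₂ 0 = 0)
    (hb : ∀ x u, |u| ≤ ρ₁ ‖x‖ + ρ₂ |H x u|) {u : ℝ} (hu : u ≠ 0) : H 0 u ≠ 0 := by
  intro h
  have := hb 0 u
  rw [norm_zero, hρ₁, h, abs_zero, hρ₂, add_zero] at this
  exact hu (abs_nonpos_iff.1 this)

lemma gain_le {r ε : ℝ} (hε : 0 ≤ ε) (h : ∀ x u, ‖x‖ ≤ r → |H x u| ≤ r → |u| ≤ ε) :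
    gain H r ≤ ε :=
  csSup_le (insert_nonempty _ _) <| forall_mem_insert.2
    ⟨hε, forall_mem_image.2 fun p hp => h p.1 p.2 hp.1 hp.2⟩

variable [ProperSpace E]

lemma UniformlyCoercive.exists_abs_le (hH : UniformlyCoercive H) (r : ℝ) :
    ∃ B, ∀ x u, ‖x‖ ≤ r → |H x u| ≤ r → |u| ≤ B := by
  obtain ⟨M, hM⟩ := hH _ (isCompact_closedBall 0 r) (|r| + 1) (by positivity)
  refine ⟨M, fun x u hx hu => (lt_of_not_ge fun hMu => ?_).le⟩
  linarith [hM x (mem_closedBall_zero_iff.2 hx) u hMu, le_abs_self r]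

lemma UniformlyCoercive.bddAbove_gain (hH : UniformlyCoercive H) (r : ℝ) :
    BddAbove (insert 0 ((fun p : E × ℝ => |p.2|) '' {p | ‖p.1‖ ≤ r ∧ |H p.1 p.2| ≤ r})) := by
  obtain ⟨B, hB⟩ := hH.exists_abs_le r
  exact (BddAbove.insert 0 ⟨B, forall_mem_image.2 fun p hp => hB p.1 p.2 hp.1 hp.2⟩)

lemma UniformlyCoercive.gain_nonneg (hH : UniformlyCoercive H) (r : ℝ) : 0 ≤ gain H r :=
  le_csSup (hH.bddAbove_gain r) (mem_insert 0 _)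

lemma UniformlyCoercive.abs_le_gain (hH : UniformlyCoercive H) (x : E) (u : ℝ) :
    |u| ≤ gain H (max ‖x‖ |H x u|) :=
  le_csSup (hH.bddAbove_gain _) <|
    mem_insert_of_mem _ ⟨(x, u), ⟨le_max_left _ _, le_max_right _ _⟩, rfl⟩

lemma UniformlyCoercive.monotone_gain (hH : UniformlyCoercive H) : Monotone (gain H) :=
  fun _ _ hrs => csSup_le_csSup (hH.bddAbove_gain _) (insert_nonempty _ _) <|
    insert_subset_insert <| image_mono fun _ hp => ⟨hp.1.trans hrs, hp.2.trans hrs⟩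

lemma UniformlyCoercive.gain_zero (hH : UniformlyCoercive H) (hH0 : ∀ u, u ≠ 0 → H 0 u ≠ 0) :
    gain H 0 = 0 := by
  refine le_antisymm (gain_le le_rfl fun x u hx hu => ?_) (hH.gain_nonneg 0)
  rw [norm_le_zero_iff.1 hx] at hu
  by_contra hu0
  exact hH0 u (by rintro rfl; simp at hu0) (abs_nonpos_iff.1 hu)

lemma UniformlyCoercive.exists_pos_gain_le (hcont : Continuous (Function.uncurry H))
    (hH : UniformlyCoercive H) (hH0 : ∀ u, u ≠ 0 → H 0 u ≠ 0) {ε : ℝ} (hε : 0 < ε) :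
    ∃ δ > 0, gain H δ ≤ ε := by
  obtain ⟨B, hB⟩ := hH.exists_abs_le 1
  set C := Metric.closedBall (0 : E) 1 ×ˢ Icc (-B) B ∩ {p | ε ≤ |p.2|}
  have hC : IsCompact C := ((isCompact_closedBall 0 1).prod isCompact_Icc).inter_right
    (isClosed_le continuous_const (continuous_abs.comp continuous_snd))
  have hpos : ∀ p ∈ C, 0 < max ‖p.1‖ |H p.1 p.2| := by
    rintro ⟨x, u⟩ ⟨-, hu⟩
    by_contra! h
    obtain rfl : x = 0 := norm_le_zero_iff.1 ((le_max_left _ _).trans h)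
    refine hH0 u ?_ (abs_nonpos_iff.1 ((le_max_right _ _).trans h))
    rintro rfl
    exact hε.not_ge (by simpa using hu)
  obtain ⟨m, hm, hmC⟩ := hC.exists_forall_le'
    ((continuous_norm.comp continuous_fst).max (continuous_abs.comp hcont)).continuousOn hpos
  have hδ1 : min m 1 / 2 ≤ 1 := by linarith [min_le_right m 1]
  refine ⟨min m 1 / 2, by positivity, gain_le hε.le fun x u hx hu => ?_⟩
  by_contra! hεu
  have hmem : (x, u) ∈ C := ⟨⟨mem_closedBall_zero_iff.2 (hx.trans hδ1),
    abs_le.1 (hB x u (hx.trans hδ1) (hu.trans hδ1))⟩, hεu.le⟩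
  have hmx : m ≤ max ‖x‖ |H x u| := hmC _ hmem
  linarith [max_le hx hu, min_le_left m 1]

lemma UniformlyCoercive.continuousWithinAt_gain (hcont : Continuous (Function.uncurry H))
    (hH : UniformlyCoercive H) (hH0 : ∀ u, u ≠ 0 → H 0 u ≠ 0) :
    ContinuousWithinAt (gain H) (Ici 0) 0 := by
  rw [ContinuousWithinAt, hH.gain_zero hH0]
  refine tendsto_order.2 ⟨fun a ha => .of_forall fun r => ha.trans_le (hH.gain_nonneg r),
    fun a ha => ?_⟩
  obtain ⟨δ, hδ, hδa⟩ := hH.exists_pos_gain_le hcont hH0 (half_pos ha)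
  filter_upwards [Ico_mem_nhdsGE hδ] with r hr
  linarith [hH.monotone_gain hr.2.le]

theorem UniformlyCoercive.exists_classKInf_abs_le_add (hcont : Continuous (Function.uncurry H))
    (hH : UniformlyCoercive H) (hH0 : ∀ u, u ≠ 0 → H 0 u ≠ 0) :
    ∃ ρ, ClassKInf ρ ∧ ∀ x u, |u| ≤ ρ ‖x‖ + ρ |H x u| := by
  obtain ⟨ρ, hρ, hgain⟩ := exists_classKInf_ge hH.monotone_gain (hH.gain_zero hH0)
    (hH.continuousWithinAt_gain hcont hH0)
  refine ⟨ρ, hρ, fun x u => ?_⟩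
  calc |u| ≤ gain H (max ‖x‖ |H x u|) := hH.abs_le_gain x u
    _ ≤ ρ (max ‖x‖ |H x u|) := hgain _ ((norm_nonneg x).trans (le_max_left _ _))
    _ ≤ ρ ‖x‖ + ρ |H x u| := hρ.apply_max_le_add (norm_nonneg x) (abs_nonneg _)

end Gain

theorem relative_degree_bound_iff (n : ℕ)
    (Hr : EuclideanSpace ℝ (Fin n) → ℝ → ℝ)
    (hcont : Continuous fun p : EuclideanSpace ℝ (Fin n) × ℝ => Hr p.1 p.2) :
    (∃ ρ1 ρ2 : ℝ → ℝ, ClassKInf ρ1 ∧ ClassKInf ρ2 ∧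
        ∀ (x : EuclideanSpace ℝ (Fin n)) (u0 : ℝ),
          |u0| ≤ ρ1 ‖x‖ + ρ2 |Hr x u0|) ↔
    ((∀ X : Set (EuclideanSpace ℝ (Fin n)), IsCompact X →
        ∀ K : ℝ, 0 < K → ∃ M : ℝ, ∀ x ∈ X, ∀ u0 : ℝ, M ≤ |u0| → K ≤ |Hr x u0|) ∧
      ∀ u0 : ℝ, u0 ≠ 0 → Hr 0 u0 ≠ 0) := by
  constructor
  · rintro ⟨ρ1, ρ2, hρ1, hρ2, hb⟩
    exact ⟨UniformlyCoercive.of_abs_le_add hρ1.monotoneOn hρ2.monotoneOn hb,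
      fun u hu => apply_zero_ne_zero_of_abs_le_add hρ1.2.2.1 hρ2.2.2.1 hb hu⟩
  · rintro ⟨hH, hH0⟩
    obtain ⟨ρ, hρ, hb⟩ := UniformlyCoercive.exists_classKInf_abs_le_add hcont hH hH0
    exact ⟨ρ, ρ, hρ, hρ, hb⟩
end

section
/- Let a, b : ℝ^n → ℝ be continuous with a(x) ≠ 0 for all x and b(0) = 0, and define H(x,u0) := b(x) + a(x)·u0. Suppose there exist class K∞ functions ρ̄1, ρ̄2 with 1/|a(x)| ≤ ρ̄1(|x|) + 1/|a(0)| and |b(x)| ≤ ρ̄2(|x|) for all x. Then there exist class K∞ functions ρ1, ρ2 such that |u0| ≤ ρ1(|x|) + ρ2(|H(x,u0)|) for all x ∈ ℝ^n, u0 ∈ ℝ. -/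
lemma ClassKInf.nonneg_s6 {f : ℝ → ℝ} (hf : ClassKInf f) {s : ℝ} (hs : 0 ≤ s) : 0 ≤ f s := by
  rcases eq_or_lt_of_le hs with h | h
  · rw [← h, hf.2.2.1]
  · have := hf.2.1 (Set.self_mem_Ici) (le_of_lt h) h
    linarith [hf.2.2.1]

lemma ClassKInf.add {f g : ℝ → ℝ} (hf : ClassKInf f) (hg : ClassKInf g) :
    ClassKInf (fun s => f s + g s) := by
  refine ⟨hf.1.add hg.1, ?_, by simp [hf.2.2.1, hg.2.2.1], ?_⟩
  · intro x hx y hy hxy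
    exact add_lt_add (hf.2.1 hx hy hxy) (hg.2.1 hx hy hxy)
  · intro M
    obtain ⟨s, hs, hMs⟩ := hf.2.2.2 M
    exact ⟨s, hs, by have := hg.nonneg_s6 hs; dsimp; linarith⟩

lemma ClassKInf.mul {f g : ℝ → ℝ} (hf : ClassKInf f) (hg : ClassKInf g) :
    ClassKInf (fun s => f s * g s) := by
  refine ⟨hf.1.mul hg.1, ?_, by simp [hf.2.2.1], ?_⟩
  · intro x hx y hy hxy
    have hfx := hf.nonneg_s6 hx
    have hgx := hg.nonneg_s6 hx
    have h1 := hf.2.1 hx hy hxy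
    have h2 := hg.2.1 hx hy hxy
    dsimp
    nlinarith
  · intro M
    obtain ⟨s1, hs1, h1⟩ := hf.2.2.2 1
    obtain ⟨s2, hs2, h2⟩ := hg.2.2.2 (max M 0)
    refine ⟨max s1 s2, le_trans hs1 (le_max_left _ _), ?_⟩
    have hmem : max s1 s2 ∈ Set.Ici (0:ℝ) := le_trans hs1 (le_max_left _ _)
    have hfs : f s1 ≤ f (max s1 s2) :=
      hf.2.1.monotoneOn hs1 hmem (le_max_left _ _)
    have hgs : g s2 ≤ g (max s1 s2) :=
      hg.2.1.monotoneOn hs2 hmem (le_max_right _ _)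
    have hgpos : max M 0 < g (max s1 s2) := lt_of_lt_of_le h2 hgs
    have hf1 : 1 ≤ f (max s1 s2) := le_trans (le_of_lt h1) hfs
    have : M ≤ max M 0 := le_max_left _ _
    dsimp
    nlinarith [le_max_right M 0]

lemma ClassKInf.const_mul {f : ℝ → ℝ} (hf : ClassKInf f) {c : ℝ} (hc : 0 < c) :
    ClassKInf (fun s => c * f s) := by
  refine ⟨(continuousOn_const).mul hf.1, ?_, by simp [hf.2.2.1], ?_⟩
  · intro x hx y hy hxy
    exact mul_lt_mul_of_pos_left (hf.2.1 hx hy hxy) hc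
  · intro M
    obtain ⟨s, hs, hMs⟩ := hf.2.2.2 (M / c)
    exact ⟨s, hs, by dsimp; rw [← div_lt_iff₀' hc]; exact hMs⟩

lemma ClassKInf.id : ClassKInf (fun s : ℝ => s) :=
  ⟨continuousOn_id, fun _ _ _ _ h => h, rfl, fun M => ⟨max M 0 + 1, by positivity,
    by show M < max M 0 + 1; have := le_max_left M 0; linarith⟩⟩

theorem affine_relative_degree_bound (n : ℕ)
    (a b : EuclideanSpace ℝ (Fin n) → ℝ)
    (ha : Continuous a) (hb : Continuous b)
    (ha0 : ∀ x, a x ≠ 0) (hb0 : b 0 = 0)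
    (H : EuclideanSpace ℝ (Fin n) → ℝ → ℝ)
    (hH : ∀ x u0, H x u0 = b x + a x * u0)
    (rhoBar1 rhoBar2 : ℝ → ℝ) (hrhoBar1 : ClassKInf rhoBar1) (hrhoBar2 : ClassKInf rhoBar2)
    (hainv : ∀ x, 1 / |a x| ≤ rhoBar1 ‖x‖ + 1 / |a 0|)
    (hbb : ∀ x, |b x| ≤ rhoBar2 ‖x‖) :
    ∃ ρ1 ρ2 : ℝ → ℝ, ClassKInf ρ1 ∧ ClassKInf ρ2 ∧
      ∀ (x : EuclideanSpace ℝ (Fin n)) (u0 : ℝ),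
        |u0| ≤ ρ1 ‖x‖ + ρ2 |H x u0| := by
  set c : ℝ := 1 / |a 0| with hc_def
  have hc : 0 < c := by
    have : 0 < |a 0| := abs_pos.mpr (ha0 0)
    positivity
  have hhalf : (0:ℝ) < 1/2 := by norm_num
  refine ⟨fun s => (1/2) * (rhoBar1 s * rhoBar1 s) + (rhoBar1 s * rhoBar2 s + c * rhoBar2 s),
    fun s => (1/2) * (s * s) + c * s, ?_, ?_, ?_⟩
  · exact ((hrhoBar1.mul hrhoBar1).const_mul hhalf).add
      ((hrhoBar1.mul hrhoBar2).add (hrhoBar2.const_mul hc))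
  · exact ((ClassKInf.id.mul ClassKInf.id).const_mul hhalf).add (ClassKInf.id.const_mul hc)
  · intro x u0
    have hA : 0 < |a x| := abs_pos.mpr (ha0 x)
    have hnx : (0:ℝ) ≤ ‖x‖ := norm_nonneg x
    have hr1 : 0 ≤ rhoBar1 ‖x‖ := hrhoBar1.nonneg_s6 hnx
    have hr2 : 0 ≤ rhoBar2 ‖x‖ := hrhoBar2.nonneg_s6 hnx
    have hBr2 : |b x| ≤ rhoBar2 ‖x‖ := hbb x
    have hHv : (0:ℝ) ≤ |H x u0| := abs_nonneg _
    have hinv := hainv x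
    have hau : |a x * u0| ≤ |H x u0| + |b x| := by
      have : a x * u0 = H x u0 - b x := by rw [hH]; ring
      rw [this]
      exact abs_sub _ _
    have key : |a x| * |u0| ≤ |H x u0| + |b x| := by
      rw [← abs_mul]; exact hau
    -- |u0| ≤ (|H| + |b|) * (1/|a x|) ≤ (|H| + |b|) * (rhoBar1 ‖x‖ + c)
    have h1 : |u0| ≤ (|H x u0| + |b x|) * (rhoBar1 ‖x‖ + c) := by
      have h2 : |u0| ≤ (|H x u0| + |b x|) * (1 / |a x|) := by
        rw [mul_one_div, le_div_iff₀ hA, mul_comm]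
        exact key
      calc |u0| ≤ (|H x u0| + |b x|) * (1 / |a x|) := h2
        _ ≤ (|H x u0| + |b x|) * (rhoBar1 ‖x‖ + c) := by
            apply mul_le_mul_of_nonneg_left hinv
            have := abs_nonneg (b x); linarith
    nlinarith [sq_nonneg (|H x u0| - rhoBar1 ‖x‖), abs_nonneg (b x)]
end

section
/- Let a : ℝ^n → ℝ be continuous with a(x) ≠ 0 for every x. Then there exists a class K∞ function ρ̄ such that 1/|a(x)| ≤ ρ̄(|x|) + 1/|a(0)| for all x ∈ ℝ^n. -/
open Metric Set

theorem classKInf_add_sub_of_monotoneOn {g : ℝ → ℝ} (hc : ContinuousOn g (Ici 0))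
    (hm : MonotoneOn g (Ici 0)) : ClassKInf fun r => r + (g r - g 0) := by
  refine ⟨continuousOn_id.add (hc.sub continuousOn_const),
    (strictMono_id.strictMonoOn _).add_monotone
      fun r hr s hs hrs => sub_le_sub_right (hm hr hs hrs) _,
    by simp, fun M => ⟨max M 0 + 1, by positivity, ?_⟩⟩
  have := hm (le_refl (0 : ℝ)) (show (0 : ℝ) ≤ max M 0 + 1 by positivity) (by positivity)
  linarith [le_max_left M 0]

section BallSup

variable {E : Type*} [NormedAddCommGroup E] [NormedSpace ℝ E]

/-- The supremum of `f` over the closed ball `closedBall 0 |r|`, parametrised over the unit ball so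
that the set of parameters does not depend on `r`. -/
noncomputable def ballSup (f : E → ℝ) (r : ℝ) : ℝ :=
  sSup ((fun y => f (r • y)) '' closedBall 0 1)

theorem continuous_ballSup [ProperSpace E] {f : E → ℝ} (hf : Continuous f) :
    Continuous (ballSup f) :=
  (isCompact_closedBall 0 1).continuous_sSup (hf.comp continuous_smul)

theorem ballSup_zero (f : E → ℝ) : ballSup f 0 = f 0 := by
  simp [ballSup, (nonempty_closedBall.2 zero_le_one).image_const]

theorem le_ballSup [ProperSpace E] {f : E → ℝ} (hf : Continuous f) {x : E} {r : ℝ}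
    (hx : ‖x‖ ≤ r) : f x ≤ ballSup f r := by
  have hbdd : BddAbove ((fun y => f (r • y)) '' closedBall 0 1) :=
    ((isCompact_closedBall 0 1).image (hf.comp (continuous_const_smul r))).bddAbove
  refine le_csSup hbdd ⟨r⁻¹ • x, ?_, ?_⟩
  · rw [mem_closedBall_zero_iff, norm_smul, norm_inv, Real.norm_eq_abs]
    exact inv_mul_le_one_of_le₀ (hx.trans (le_abs_self r)) (abs_nonneg r)
  · rcases eq_or_ne r 0 with rfl | hr
    · simp [norm_le_zero_iff.1 hx]
    · simp [smul_inv_smul₀ hr]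

theorem monotoneOn_ballSup [ProperSpace E] {f : E → ℝ} (hf : Continuous f) :
    MonotoneOn (ballSup f) (Ici 0) := by
  intro r hr s _ hrs
  refine csSup_le ((nonempty_closedBall.2 zero_le_one).image _) ?_
  rintro _ ⟨y, hy, rfl⟩
  refine le_ballSup hf ?_
  rw [norm_smul, Real.norm_eq_abs, abs_of_nonneg hr]
  exact (mul_le_of_le_one_right hr (mem_closedBall_zero_iff.1 hy)).trans hrs

end BallSup

theorem exists_classKInf_bound_inv_abs (n : ℕ)
    (a : EuclideanSpace ℝ (Fin n) → ℝ) (ha : Continuous a)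
    (ha0 : ∀ x, a x ≠ 0) :
    ∃ ρ : ℝ → ℝ, ClassKInf ρ ∧ ∀ x, 1 / |a x| ≤ ρ ‖x‖ + 1 / |a 0| := by
  set f : EuclideanSpace ℝ (Fin n) → ℝ := fun x => 1 / |a x|
  have hf : Continuous f := continuous_const.div ha.abs fun x => abs_ne_zero.2 (ha0 x)
  refine ⟨fun r => r + (ballSup f r - ballSup f 0),
    classKInf_add_sub_of_monotoneOn (continuous_ballSup hf).continuousOn (monotoneOn_ballSup hf),
    fun x => ?_⟩
  show f x ≤ ‖x‖ + (ballSup f ‖x‖ - ballSup f 0) + f 0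
  linarith [le_ballSup hf (le_refl ‖x‖), ballSup_zero f, norm_nonneg x]
end
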